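/- arXiv:1205.6707 — 5 statements merged into one kernel-verified Lean document; each statement's English description precedes it below -/
import Mathlib

section
/- Let K be a compact subset of ℝ^d and a ∈ K. Then there exists a dense G_δ set Ω(a) in the space M(K) of Borel probability measures on K (with the weak topology, metrized by the Lipschitz/Wasserstein-type metric ϱ) such that every μ ∈ Ω(a) has local Hölder exponent h_μ(a) = liminf_{r→0} log μ(B(a,r)) / log r equal to 0. -/
/-!
Let `U n` be the set of probability measures giving some ball `B(a, r)` with `0 < r < 1/(n+1)`
mass larger than `r ^ (1/(n+1))`. Each `U n` is open, since `μ ↦ μ G` is lower semicontinuous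
for open `G` (portmanteau). Every measure with an atom at `a` lies in all the `U n`, and these
measures are dense, because `(1 - t) μ + t δ_a → μ` as `t → 0`. Finally, for `μ` in `⋂ n, U n`
the ratio `log μ(B(a, r)) / log r` is nonnegative for `r < 1` and is frequently below `1/(n+1)`
as `r → 0`, so its liminf vanishes.
-/

open MeasureTheory Metric Filter Topology

/-- The local Hölder exponent of a measure at a point:
`h_μ(x) = liminf_{r→0⁺} log μ(B(x,r)) / log r`. -/
noncomputable def holderExp {X : Type*} [MetricSpace X] [MeasurableSpace X]
    (μ : Measure X) (x : X) : ℝ :=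
  liminf (fun r : ℝ => Real.log (μ (ball x r)).toReal / Real.log r) (𝓝[>] 0)

open Set unitInterval
open scoped ENNReal NNReal BoundedContinuousFunction

theorem Filter.liminf_eq_of_eventually_ge_of_frequently_le {β : Type*} {f : Filter β}
    {u : β → ℝ} {a : ℝ} (hge : ∀ᶠ x in f, a ≤ u x) (hle : ∀ ε > 0, ∃ᶠ x in f, u x ≤ a + ε) :
    liminf u f = a := by
  have hcobdd : IsCoboundedUnder (· ≥ ·) f u := by
    refine ⟨a + 1, fun b hb => ?_⟩
    obtain ⟨x, hx, hbx⟩ := ((hle 1 one_pos).and_eventually hb).exists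
    exact hbx.trans hx
  refine le_antisymm (le_of_forall_pos_le_add fun ε hε => ?_) (le_liminf_of_le hcobdd hge)
  exact liminf_le_of_frequently_le (hle ε hε) ⟨a, hge⟩

namespace MeasureTheory.ProbabilityMeasure

variable {X : Type*} [MeasurableSpace X]

theorem isOpen_setOf_lt_apply [TopologicalSpace X] [OpensMeasurableSpace X]
    [HasOuterApproxClosed X] {G : Set X} (hG : IsOpen G) (c : ℝ≥0∞) :
    IsOpen {μ : ProbabilityMeasure X | c < (μ : Measure X) G} :=
  isOpen_iff_mem_nhds.2 fun μ hμ => eventually_lt_of_lt_liminf <| hμ.trans_le <|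
    le_liminf_measure_open_of_tendsto tendsto_id hG

noncomputable def mixDirac (μ : ProbabilityMeasure X) (a : X) (t : I) : ProbabilityMeasure X :=
  ⟨toNNReal (σ t) • (μ : Measure X) + toNNReal t • Measure.dirac a, by
    constructor
    simp [← ENNReal.coe_add]⟩

theorem mixDirac_zero (μ : ProbabilityMeasure X) (a : X) : mixDirac μ a 0 = μ := by
  ext s
  simp [mixDirac]

theorem le_mixDirac_apply_singleton (μ : ProbabilityMeasure X) (a : X) (t : I) :
    (toNNReal t : ℝ≥0∞) ≤ (mixDirac μ a t : Measure X) {a} := by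
  simp [mixDirac]

theorem integral_mixDirac [TopologicalSpace X] [OpensMeasurableSpace X]
    (μ : ProbabilityMeasure X) (a : X) (t : I) (f : X →ᵇ ℝ) :
    ∫ x, f x ∂(mixDirac μ a t : Measure X) = (σ t : ℝ) * ∫ x, f x ∂(μ : Measure X) + t * f a := by
  rw [mixDirac, ProbabilityMeasure.coe_mk, integral_add_measure (f.integrable _) (f.integrable _),
    integral_smul_nnreal_measure, integral_smul_nnreal_measure,
    integral_dirac' _ _ f.continuous.stronglyMeasurable]
  simp [NNReal.smul_def]

theorem continuous_mixDirac [TopologicalSpace X] [OpensMeasurableSpace X]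
    (μ : ProbabilityMeasure X) (a : X) : Continuous (mixDirac μ a) := by
  refine continuous_iff_continuousAt.2 fun t => ?_
  refine ProbabilityMeasure.tendsto_iff_forall_integral_tendsto.2 fun f => ?_
  simp only [integral_mixDirac]
  exact Continuous.tendsto (by fun_prop) t

theorem dense_setOf_pos_apply_singleton [TopologicalSpace X] [OpensMeasurableSpace X] (a : X) :
    Dense {μ : ProbabilityMeasure X | 0 < (μ : Measure X) {a}} := by
  intro μ
  have h0 : (0 : I) ∈ closure {0}ᶜ := (dense_compl_singleton (0 : I)).closure_eq ▸ mem_univ _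
  refine closure_mono ?_ (mixDirac_zero μ a ▸ image_closure_subset_closure_image
    (continuous_mixDirac μ a) (mem_image_of_mem _ h0))
  rintro _ ⟨t, ht, rfl⟩
  have ht₀ : (0 : ℝ≥0∞) < toNNReal t :=
    ENNReal.coe_pos.2 <| (NNReal.coe_pos (r := toNNReal t)).1 <| unitInterval.pos_iff_ne_zero.2 ht
  exact ht₀.trans_le (le_mixDirac_apply_singleton μ a t)

end MeasureTheory.ProbabilityMeasure

section HolderExponent

variable {X : Type*} [MetricSpace X] [MeasurableSpace X]

theorem log_toReal_div_log_nonneg {m : ℝ≥0∞} (hm : m ≤ 1) {r : ℝ} (hr₀ : 0 ≤ r) (hr₁ : r ≤ 1) :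
    0 ≤ Real.log m.toReal / Real.log r :=
  div_nonneg_of_nonpos (Real.log_nonpos ENNReal.toReal_nonneg (ENNReal.toReal_le_of_le_ofReal
    zero_le_one (by simpa using hm))) (Real.log_nonpos hr₀ hr₁)

theorem log_toReal_div_log_lt {m : ℝ≥0∞} (hm : m ≠ ∞) {r α : ℝ} (hr₀ : 0 < r) (hr₁ : r < 1)
    (h : ENNReal.ofReal (r ^ α) < m) : Real.log m.toReal / Real.log r < α := by
  have hlt : r ^ α < m.toReal :=
    (ENNReal.ofReal_lt_iff_lt_toReal (Real.rpow_nonneg hr₀.le _) hm).1 h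
  rw [div_lt_iff_of_neg (Real.log_neg hr₀ hr₁), ← Real.log_rpow hr₀]
  exact Real.log_lt_log (Real.rpow_pos_of_pos hr₀ _) hlt

theorem holderExp_eq_zero_of_forall_exists_rpow_lt {μ : Measure X}
    [IsZeroOrProbabilityMeasure μ] {x : X} (h : ∀ n : ℕ, ∃ r ∈ Ioo (0 : ℝ) (1 / (n + 1)),
      ENNReal.ofReal (r ^ (1 / (n + 1) : ℝ)) < μ (ball x r)) :
    holderExp μ x = 0 := by
  refine liminf_eq_of_eventually_ge_of_frequently_le ?_ fun ε hε => ?_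
  · filter_upwards [Ioo_mem_nhdsGT one_pos] with r hr
    exact log_toReal_div_log_nonneg prob_le_one hr.1.le hr.2.le
  rw [(nhdsGT_basis 0).frequently_iff]
  intro δ hδ
  obtain ⟨n, hn⟩ := exists_nat_one_div_lt (lt_min hε hδ)
  obtain ⟨r, hr, hμr⟩ := h n
  have hr₁ : r < 1 := hr.2.trans_le (div_le_one_of_le₀ (by simp) (by positivity))
  refine ⟨r, ⟨hr.1, hr.2.trans (hn.trans_le (min_le_right _ _))⟩, ?_⟩
  rw [zero_add]
  exact (log_toReal_div_log_lt (measure_ne_top _ _) hr.1 hr₁ hμr).le.trans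
    (hn.le.trans (min_le_left _ _))

theorem eventually_ofReal_rpow_lt_measure_ball {μ : Measure X} {x : X}
    (hx : 0 < μ {x}) {α : ℝ} (hα : 0 < α) :
    ∀ᶠ r in 𝓝[>] 0, ENNReal.ofReal (r ^ α) < μ (ball x r) := by
  have hlim : Tendsto (fun r : ℝ => ENNReal.ofReal (r ^ α)) (𝓝 0) (𝓝 0) := by
    simpa [Real.zero_rpow hα.ne'] using
      ENNReal.tendsto_ofReal (Real.continuousAt_rpow_const 0 α (Or.inr hα.le)).tendsto
  filter_upwards [nhdsWithin_le_nhds (hlim.eventually (gt_mem_nhds hx)), self_mem_nhdsWithin]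
    with r hr hr₀
  exact hr.trans_le (measure_mono (singleton_subset_iff.2 (mem_ball_self hr₀)))

end HolderExponent

theorem typical_holder_exponent_zero_at_point_general
    (d : ℕ) (K : Set (EuclideanSpace ℝ (Fin d))) (a : K) :
    ∃ Ω : Set (ProbabilityMeasure K), Dense Ω ∧ IsGδ Ω ∧
      ∀ μ ∈ Ω, holderExp (μ : Measure K) a = 0 := by
  set U : ℕ → Set (ProbabilityMeasure K) := fun n => ⋃ r ∈ Ioo (0 : ℝ) (1 / (n + 1)),
    {μ | ENNReal.ofReal (r ^ (1 / (n + 1) : ℝ)) < (μ : Measure K) (ball a r)}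
  have hU_open (n : ℕ) : IsOpen (U n) :=
    isOpen_biUnion fun _ _ => ProbabilityMeasure.isOpen_setOf_lt_apply isOpen_ball _
  have hatom_sub : {μ : ProbabilityMeasure K | 0 < (μ : Measure K) {a}} ⊆ ⋂ n, U n := by
    intro μ hμ
    refine mem_iInter.2 fun n => mem_iUnion₂.2 ?_
    have hn : (0 : ℝ) < 1 / (n + 1) := by positivity
    obtain ⟨r, hr, hμr⟩ := (Eventually.and (Ioo_mem_nhdsGT hn)
      (eventually_ofReal_rpow_lt_measure_ball hμ hn)).exists
    exact ⟨r, hr, hμr⟩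
  refine ⟨⋂ n, U n, (ProbabilityMeasure.dense_setOf_pos_apply_singleton a).mono hatom_sub,
    .iInter fun n => (hU_open n).isGδ, fun μ hμ => ?_⟩
  exact holderExp_eq_zero_of_forall_exists_rpow_lt fun n => by simpa [U] using mem_iInter.1 hμ n

/-- For a compact `K ⊂ ℝ^d` and `a ∈ K`, there is a dense `G_δ` set `Ω(a)` in the
space of Borel probability measures on `K` (with the weak topology) such that
every `μ ∈ Ω(a)` has local Hölder exponent `0` at `a`. -/
theorem typical_holder_exponent_zero_at_point
    (d : ℕ) (K : Set (EuclideanSpace ℝ (Fin d))) (hK : IsCompact K) (a : K) :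
    ∃ Ω : Set (ProbabilityMeasure K), Dense Ω ∧ IsGδ Ω ∧
      ∀ μ ∈ Ω, holderExp (μ : Measure K) a = 0 :=
  typical_holder_exponent_zero_at_point_general d K a
end

section
/- Let K ⊂ ℝ^d be compact, a ∈ K, and h > 0. Then the set Λ_h(a) = {μ ∈ M(K) : h_μ(a) = h} has empty interior in M(K). -/
/-!
A measure with an atom at `a` has local exponent `0` at `a`: `μ (ball a r)` stays between
`μ {a} > 0` and `μ univ`, while `log r → -∞`. Such measures are weakly dense, since
`t • δ_a + (1 - t) • μ → μ` as `t → 0`. Hence the level set of any `h ≠ 0` misses a dense set.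
-/

open MeasureTheory Metric Filter Topology

open unitInterval

lemma tendsto_div_log_nhdsGT_zero {g : ℝ → ℝ}
    (hg : IsBoundedUnder (· ≤ ·) (𝓝[>] 0) fun r ↦ ‖g r‖) :
    Tendsto (fun r ↦ g r / Real.log r) (𝓝[>] 0) (𝓝 0) := by
  simpa only [div_eq_inv_mul, Function.comp_def] using
    (tendsto_inv_atBot_zero.comp Real.tendsto_log_nhdsGT_zero).zero_mul_isBoundedUnder_le hg

lemma holderExp_eq_zero_of_measure_singleton_ne_zero {X : Type*} [MetricSpace X]
    [MeasurableSpace X] (μ : Measure X) [IsFiniteMeasure μ] {x : X} (hx : μ {x} ≠ 0) :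
    holderExp μ x = 0 := by
  have hatom : 0 < (μ {x}).toReal := ENNReal.toReal_pos hx (measure_ne_top μ _)
  have hbound : ∀ r > 0, |Real.log (μ (ball x r)).toReal| ≤
      max |Real.log (μ {x}).toReal| |Real.log (μ Set.univ).toReal| := by
    intro r hr
    have hle : (μ {x}).toReal ≤ (μ (ball x r)).toReal :=
      measureReal_mono (Set.singleton_subset_iff.2 (mem_ball_self hr))
    exact abs_le_max_abs_abs (Real.log_le_log hatom hle)
      (Real.log_le_log (hatom.trans_le hle) (measureReal_mono (Set.subset_univ _)))
  exact (tendsto_div_log_nhdsGT_zero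
    ⟨_, eventually_map.2 (eventually_nhdsWithin_of_forall hbound)⟩).liminf_eq

namespace MeasureTheory.ProbabilityMeasure

variable {Ω : Type*} [MeasurableSpace Ω]

noncomputable def mix (p : I) (μ ν : ProbabilityMeasure Ω) : ProbabilityMeasure Ω :=
  ⟨toNNReal p • (μ : Measure Ω) + toNNReal (σ p) • (ν : Measure Ω), inferInstance⟩

@[simp]
lemma mix_zero (μ ν : ProbabilityMeasure Ω) : mix 0 μ ν = ν := by
  ext1; simp [mix]

lemma toNNReal_smul_le_mix (p : I) (μ ν : ProbabilityMeasure Ω) :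
    toNNReal p • (μ : Measure Ω) ≤ mix p μ ν :=
  Measure.le_add_right le_rfl

lemma continuous_mix [TopologicalSpace Ω] [OpensMeasurableSpace Ω] (μ ν : ProbabilityMeasure Ω) :
    Continuous fun p ↦ mix p μ ν := by
  refine continuous_iff_forall_continuous_lintegral.2 fun f ↦ ?_
  simp only [mix, coe_mk, lintegral_add_measure, lintegral_smul_measure, ENNReal.smul_def,
    smul_eq_mul]
  exact ((ENNReal.continuous_mul_const (f.lintegral_lt_top_of_nnreal _).ne).comp
    (by fun_prop)).add
    ((ENNReal.continuous_mul_const (f.lintegral_lt_top_of_nnreal _).ne).comp (by fun_prop))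

lemma dense_setOf_measure_singleton_ne_zero [TopologicalSpace Ω] [OpensMeasurableSpace Ω]
    (x : Ω) : Dense {μ : ProbabilityMeasure Ω | (μ : Measure Ω) {x} ≠ 0} := by
  intro ν
  rw [← mix_zero ⟨Measure.dirac x, inferInstance⟩ ν]
  refine map_mem_closure (f := fun p ↦ mix p _ ν) (continuous_mix _ ν)
    (dense_compl_singleton (0 : I) 0) fun p hp ↦ ?_
  refine ne_bot_of_le_ne_bot ?_ (toNNReal_smul_le_mix p _ ν {x})
  have hp' : toNNReal p ≠ 0 := fun h0 ↦ hp (Subtype.ext (congrArg NNReal.toReal h0))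
  simpa [Measure.dirac_apply_of_mem] using hp'

end MeasureTheory.ProbabilityMeasure

theorem level_set_of_measures_empty_interior_general
    (d : ℕ) (K : Set (EuclideanSpace ℝ (Fin d))) (a : K)
    (h : ℝ) (hh : 0 < h) :
    interior {μ : ProbabilityMeasure K | holderExp (μ : Measure K) a = h} = ∅ := by
  rw [interior_eq_empty_iff_dense_compl]
  refine (ProbabilityMeasure.dense_setOf_measure_singleton_ne_zero a).mono
    fun μ hatom hμ ↦ hh.ne' ?_
  rw [← show holderExp (μ : Measure K) a = h from hμ]
  exact holderExp_eq_zero_of_measure_singleton_ne_zero _ hatom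

/-- For a compact `K ⊂ ℝ^d`, `a ∈ K` and `h > 0`, the set
`Λ_h(a) = {μ ∈ M(K) : h_μ(a) = h}` has empty interior in the space of
probability measures on `K` with the weak topology. -/
theorem level_set_of_measures_empty_interior
    (d : ℕ) (K : Set (EuclideanSpace ℝ (Fin d))) (hK : IsCompact K) (a : K)
    (h : ℝ) (hh : 0 < h) :
    interior {μ : ProbabilityMeasure K | holderExp (μ : Measure K) a = h} = ∅ :=
  level_set_of_measures_empty_interior_general d K a h hh
end

section
/- Let K ⊂ ℝ^d be compact, s ∈ (0,d], and A ⊂ K. Suppose there exists a finite Borel measure λ on K such that for every a ∈ A the lower s-density Θ^s_*(K,a,λ) = liminf_{r→0} (2r)^{−s} λ(K ∩ B(a,r)) is strictly positive. Then there exists a dense G_δ set Ω in M(K) such that for every μ ∈ Ω and every x ∈ A, h_μ(x) ≤ s; equivalently, for all μ ∈ Ω and all h > s, E_μ(h) ∩ A = ∅. -/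
/-!
Positivity of the lower density at `a ∈ A` gives `λ(B(a,r)) ≥ c r^s` for small `r`, and `A` is
covered by countably many closed, hence compact, sets `B_k` on which `c` and the range of `r` are
uniform. The probability measures that give, around every point of `B_k`, some ball of radius
`r < ε` mass more than `r^(s+ε)` form an open set (compactness of `B_k` and the portmanteau
theorem), and it contains every `μ ≥ tλ` with `t > 0`, because `c r^s > r^(s+ε)` for small `r`.
Such measures, e.g. `(1-t)ν + tλ/λ(K)`, are dense. Intersecting over `k` and `ε = 1/(n+1)` gives a
dense `G_δ` set of measures `μ` with `μ(B(x,r)) > r^(s+ε)` at arbitrarily small `r` for every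
`ε > 0` and `x ∈ A`, that is, `h_μ(x) ≤ s`.
-/

open MeasureTheory Metric Filter Topology

/-- Lower `s`-density of `K` at `a` with respect to `λ`:
`Θ^s_*(K,a,λ) = liminf_{r↓0} (2r)^{-s} λ(K ∩ B(a,r))`. -/
noncomputable def lowerDensity {X : Type*} [MetricSpace X] [MeasurableSpace X]
    (K : Set X) (a : X) (lam : Measure X) (s : ℝ) : ℝ :=
  liminf (fun r : ℝ => (lam (K ∩ ball a r)).toReal / (2 * r) ^ s) (𝓝[>] 0)

open Set
open scoped ENNReal NNReal

section LowerRegular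

variable {X : Type*} [MetricSpace X] [MeasurableSpace X]

def LowerRegularOn (μ : Measure X) (s : ℝ) (B : Set X) : Prop :=
  ∃ c > 0, ∃ δ > 0, ∀ x ∈ B, ∀ r ∈ Ioo 0 δ, ENNReal.ofReal (c * r ^ s) ≤ μ (ball x r)

variable {μ ν : Measure X} {s : ℝ} {B : Set X}

lemma LowerRegularOn.mono_measure (h : LowerRegularOn μ s B) (hμν : μ ≤ ν) :
    LowerRegularOn ν s B := by
  obtain ⟨c, hc, δ, hδ, hμ⟩ := h
  exact ⟨c, hc, δ, hδ, fun x hx r hr => (hμ x hx r hr).trans (hμν _)⟩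

lemma LowerRegularOn.smul (h : LowerRegularOn μ s B) {t : ℝ≥0} (ht : 0 < t) :
    LowerRegularOn (t • μ) s B := by
  obtain ⟨c, hc, δ, hδ, hμ⟩ := h
  refine ⟨t * c, by positivity, δ, hδ, fun x hx r hr => ?_⟩
  rw [mul_assoc, ENNReal.ofReal_mul t.coe_nonneg, ENNReal.ofReal_coe_nnreal, Measure.smul_apply,
    ENNReal.smul_def, smul_eq_mul]
  gcongr
  exact hμ x hx r hr

lemma LowerRegularOn.closure (h : LowerRegularOn μ s B) : LowerRegularOn μ s (closure B) := by
  obtain ⟨c, hc, δ, hδ, hμ⟩ := h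
  refine ⟨c / 2 ^ s, by positivity, δ, hδ, fun y hy r hr => ?_⟩
  obtain ⟨a, ha, hya⟩ := Metric.mem_closure_iff.1 hy (r / 2) (half_pos hr.1)
  calc ENNReal.ofReal (c / 2 ^ s * r ^ s) = ENNReal.ofReal (c * (r / 2) ^ s) := by
        rw [Real.div_rpow hr.1.le zero_le_two]; ring_nf
    _ ≤ μ (ball a (r / 2)) := hμ a ha _ ⟨half_pos hr.1, by linarith [hr.2]⟩
    _ ≤ μ (ball y r) := measure_mono (ball_subset_ball' (by rw [dist_comm]; linarith))

lemma LowerRegularOn.measure_ne_zero (h : LowerRegularOn μ s B) (hB : B.Nonempty) : μ ≠ 0 := by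
  obtain ⟨c, hc, δ, hδ, hμ⟩ := h
  obtain ⟨x, hx⟩ := hB
  rintro rfl
  have := hμ x hx (δ / 2) ⟨half_pos hδ, half_lt_self hδ⟩
  simp only [Measure.coe_zero, Pi.zero_apply, nonpos_iff_eq_zero, ENNReal.ofReal_eq_zero] at this
  have : 0 < c * (δ / 2) ^ s := by positivity
  linarith

lemma exists_closed_cover_lowerRegularOn {A : Set X} (h : ∀ a ∈ A, LowerRegularOn μ s {a}) :
    ∃ B : ℕ → Set X, (∀ k, IsClosed (B k)) ∧ (∀ k, LowerRegularOn μ s (B k)) ∧ A ⊆ ⋃ k, B k := by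
  refine ⟨fun k => closure {a ∈ A | ∀ r ∈ Ioo 0 (1 / (k + 1 : ℝ)),
      ENNReal.ofReal (1 / (k + 1) * r ^ s) ≤ μ (ball a r)}, fun k => isClosed_closure,
    fun k => LowerRegularOn.closure ⟨_, Nat.one_div_pos_of_nat, _, Nat.one_div_pos_of_nat,
      fun a ha => ha.2⟩, fun a ha => ?_⟩
  obtain ⟨c, hc, δ, hδ, hμ⟩ := h a ha
  obtain ⟨k, hk⟩ := exists_nat_one_div_lt (lt_min hc hδ)
  refine mem_iUnion.2 ⟨k, subset_closure ⟨ha, fun r hr => le_trans ?_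
    (hμ a rfl r ⟨hr.1, hr.2.trans (hk.trans_le (min_le_right _ _))⟩)⟩⟩
  have hr_pow : 0 ≤ r ^ s := Real.rpow_nonneg hr.1.le s
  gcongr
  exact hk.le.trans (min_le_left _ _)

end LowerRegular

lemma exists_le_measure_inter_ball_of_lowerDensity_pos {X : Type*} [MetricSpace X]
    [MeasurableSpace X] {K : Set X} {a : X} {ρ : Measure X} {s : ℝ}
    (h : 0 < lowerDensity K a ρ s) :
    ∃ c > 0, ∃ δ > 0, ∀ r ∈ Ioo 0 δ, ENNReal.ofReal (c * r ^ s) ≤ ρ (K ∩ ball a r) := by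
  have h_nonneg : ∀ᶠ r in 𝓝[>] (0 : ℝ), 0 ≤ (ρ (K ∩ ball a r)).toReal / (2 * r) ^ s :=
    eventually_mem_nhdsWithin.mono fun r hr => by
      have : 0 < (2 * r) ^ s := Real.rpow_pos_of_pos (mul_pos two_pos hr) s
      positivity
  obtain ⟨δ, hδ, hρδ⟩ := (nhdsGT_basis 0).eventually_iff.1
    (eventually_lt_of_lt_liminf (half_lt_self h) (isBoundedUnder_of_eventually_ge h_nonneg))
  refine ⟨lowerDensity K a ρ s / 2 * 2 ^ s, by positivity, δ, hδ, fun r hr => ?_⟩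
  have h2r : 0 < (2 * r) ^ s := Real.rpow_pos_of_pos (mul_pos two_pos hr.1) s
  refine ENNReal.ofReal_le_of_le_toReal ?_
  rw [mul_assoc, ← Real.mul_rpow zero_le_two hr.1.le]
  exact ((lt_div_iff₀ h2r).1 (hρδ hr)).le

lemma lowerRegularOn_comap_of_lowerDensity_pos {X : Type*} [MetricSpace X] [MeasurableSpace X]
    {K : Set X} (hK : MeasurableSet K) {ρ : Measure X} {s : ℝ} {a : K}
    (h : 0 < lowerDensity K a ρ s) : LowerRegularOn (ρ.comap Subtype.val) s {a} := by
  obtain ⟨c, hc, δ, hδ, hρ⟩ := exists_le_measure_inter_ball_of_lowerDensity_pos h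
  refine ⟨c, hc, δ, hδ, fun x hx r hr => ?_⟩
  rw [mem_singleton_iff.1 hx, comap_subtype_coe_apply hK,
    ← Isometry.preimage_ball isometry_subtype_coe, Subtype.image_preimage_coe]
  exact hρ r hr

section HolderExponent

variable {X : Type*} [MetricSpace X] [MeasurableSpace X]

lemma holderExp_le_of_frequently (μ : Measure X) [IsProbabilityMeasure μ] (x : X) {s : ℝ}
    (h : ∀ p > s, ∃ᶠ r in 𝓝[>] 0, ENNReal.ofReal (r ^ p) < μ (ball x r)) :
    holderExp μ x ≤ s := by
  have h_unit : ∀ᶠ r in 𝓝[>] (0 : ℝ), r ∈ Ioo 0 1 := Ioo_mem_nhdsGT one_pos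
  -- a real `liminf` is junk unless the function is bounded below
  have h_nonneg : ∀ᶠ r in 𝓝[>] (0 : ℝ), 0 ≤ Real.log (μ (ball x r)).toReal / Real.log r :=
    h_unit.mono fun r hr => div_nonneg_of_nonpos
      (Real.log_nonpos ENNReal.toReal_nonneg (measureReal_le_one (μ := μ)))
      (Real.log_neg hr.1 hr.2).le
  refine le_of_forall_gt_imp_ge_of_dense fun p hp => liminf_le_of_frequently_le
    (((h p hp).and_eventually h_unit).mono fun r ⟨hμr, hr⟩ => ?_)
    (isBoundedUnder_of_eventually_ge h_nonneg)
  have hμr' : r ^ p < (μ (ball x r)).toReal :=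
    (ENNReal.ofReal_lt_iff_lt_toReal (Real.rpow_nonneg hr.1.le p) (measure_ne_top _ _)).1 hμr
  rw [div_le_iff_of_neg (Real.log_neg hr.1 hr.2), ← Real.log_rpow hr.1]
  exact (Real.log_lt_log (Real.rpow_pos_of_pos hr.1 p) hμr').le

end HolderExponent

section HeavyBalls

variable {X : Type*} [MetricSpace X] [MeasurableSpace X]

-- `ε` bounds both the radius and the excess of the exponent over `s`, so that the countable
-- family `ε = 1 / (n + 1)` controls the Hölder exponent.
def heavyBallSet (B : Set X) (s ε : ℝ) : Set (ProbabilityMeasure X) :=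
  {μ | ∀ x ∈ B, ∃ r ∈ Ioo 0 ε, ENNReal.ofReal (r ^ (s + ε)) < (μ : Measure X) (ball x r)}

lemma holderExp_le_of_forall_mem_heavyBallSet {B : Set X} {s : ℝ} {μ : ProbabilityMeasure X}
    {x : X} (hx : x ∈ B) (hμ : ∀ n : ℕ, μ ∈ heavyBallSet B s (1 / (n + 1))) :
    holderExp (μ : Measure X) x ≤ s := by
  refine holderExp_le_of_frequently _ x fun p hp => (nhdsGT_basis 0).frequently_iff.2 ?_
  intro δ hδ
  obtain ⟨n, hn⟩ := exists_nat_one_div_lt (lt_min hδ (sub_pos.2 hp))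
  obtain ⟨r, hr, hμr⟩ := hμ n x hx
  have hr_le_one : r ≤ 1 := hr.2.le.trans (div_le_one_of_le₀ (by simp) (by positivity))
  refine ⟨r, ⟨hr.1, hr.2.trans (hn.trans_le (min_le_left _ _))⟩, lt_of_le_of_lt ?_ hμr⟩
  refine ENNReal.ofReal_le_ofReal (Real.rpow_le_rpow_of_exponent_ge hr.1 hr_le_one ?_)
  linarith [min_le_right δ (p - s)]

lemma LowerRegularOn.mem_heavyBallSet {μ : ProbabilityMeasure X} {s ε : ℝ} {B : Set X}
    (h : LowerRegularOn (μ : Measure X) s B) (hε : 0 < ε) : μ ∈ heavyBallSet B s ε := by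
  obtain ⟨c, hc, δ, hδ, hμ⟩ := h
  have h_pow : Tendsto (fun r : ℝ => r ^ ε) (𝓝[>] 0) (𝓝 0) := by
    simpa [Real.zero_rpow hε.ne'] using
      (Real.continuousAt_rpow_const 0 ε (Or.inr hε.le)).tendsto.mono_left nhdsWithin_le_nhds
  have h_small : ∀ᶠ r in 𝓝[>] (0 : ℝ), r ∈ Ioo 0 (min δ ε) := Ioo_mem_nhdsGT (lt_min hδ hε)
  obtain ⟨r, hr, hr_pow⟩ := (h_small.and (h_pow.eventually (gt_mem_nhds hc))).exists
  refine fun x hx => ⟨r, ⟨hr.1, hr.2.trans_le (min_le_right _ _)⟩, ?_⟩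
  have hrs : 0 < r ^ s := Real.rpow_pos_of_pos hr.1 s
  calc ENNReal.ofReal (r ^ (s + ε)) < ENNReal.ofReal (c * r ^ s) := by
        rw [ENNReal.ofReal_lt_ofReal_iff (by positivity), Real.rpow_add hr.1, mul_comm]
        gcongr
    _ ≤ (μ : Measure X) (ball x r) := hμ x hx r ⟨hr.1, hr.2.trans_le (min_le_left _ _)⟩

lemma exists_pos_lt_measure_ball_sub (μ : Measure X) (x : X) {r : ℝ} {c : ℝ≥0∞}
    (hc : c < μ (ball x r)) : ∃ ρ > 0, c < μ (ball x (r - ρ)) := by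
  have h_mono : Monotone fun n : ℕ => ball x (r - 1 / (n + 1)) := fun m n hmn =>
    ball_subset_ball (by gcongr)
  have h_union : ⋃ n : ℕ, ball x (r - 1 / (n + 1)) = ball x r := by
    refine Subset.antisymm (iUnion_subset fun n => ball_subset_ball ?_) fun y hy => ?_
    · linarith [Nat.one_div_pos_of_nat (α := ℝ) (n := n)]
    obtain ⟨n, hn⟩ := exists_nat_one_div_lt (sub_pos.2 (mem_ball.1 hy))
    exact mem_iUnion.2 ⟨n, mem_ball.2 (by linarith)⟩
  have h_lim := tendsto_measure_iUnion_atTop (μ := μ) h_mono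
  rw [h_union] at h_lim
  obtain ⟨n, hn⟩ := (h_lim.eventually_const_lt hc).exists
  exact ⟨_, Nat.one_div_pos_of_nat, hn⟩

lemma isOpen_heavyBallSet [BorelSpace X] {B : Set X} (hB : IsCompact B) (s ε : ℝ) :
    IsOpen (heavyBallSet B s ε) := by
  refine isOpen_iff_mem_nhds.2 fun μ hμ =>
    hB.eventually_forall_of_forall_eventually fun x hx => ?_
  obtain ⟨r, hr, hμr⟩ := hμ x hx
  obtain ⟨ρ, hρ, hμρ⟩ := exists_pos_lt_measure_ball_sub _ x hμr
  have h_near_μ : ∀ᶠ ν : ProbabilityMeasure X in 𝓝 μ,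
      ENNReal.ofReal (r ^ (s + ε)) < (ν : Measure X) (ball x (r - ρ)) :=
    eventually_lt_of_lt_liminf (hμρ.trans_le
      (ProbabilityMeasure.le_liminf_measure_open_of_tendsto tendsto_id isOpen_ball))
  filter_upwards [h_near_μ.prod_nhds (ball_mem_nhds x hρ)] with ⟨ν, y⟩ ⟨hν, hy⟩
  refine ⟨r, hr, hν.trans_le (measure_mono (ball_subset_ball' ?_))⟩
  linarith [mem_ball'.1 hy]

end HeavyBalls

section Density

lemma isProbabilityMeasure_convexCombination {X : Type*} [MeasurableSpace X] (μ ν : Measure X)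
    [IsProbabilityMeasure μ] [IsProbabilityMeasure ν] {t : ℝ≥0} (ht : t ≤ 1) :
    IsProbabilityMeasure ((1 - t) • μ + t • ν) := by
  constructor
  rw [Measure.add_apply, Measure.smul_apply, Measure.smul_apply, measure_univ, measure_univ,
    ← add_smul, tsub_add_cancel_of_le ht, one_smul]

variable {X : Type*} [TopologicalSpace X] [MeasurableSpace X] [OpensMeasurableSpace X]

lemma dense_setOf_smul_le (Λ : ProbabilityMeasure X) :
    Dense {μ : ProbabilityMeasure X | ∃ t : ℝ≥0, 0 < t ∧ t • (Λ : Measure X) ≤ μ} := by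
  intro ν
  set t : ℕ → ℝ≥0 := fun n => (n + 1 : ℝ≥0)⁻¹
  have ht_le : ∀ n, t n ≤ 1 := fun n => inv_le_one_of_one_le₀ (by simp)
  let μ : ℕ → ProbabilityMeasure X := fun n =>
    ⟨(1 - t n) • (ν : Measure X) + t n • (Λ : Measure X),
      isProbabilityMeasure_convexCombination _ _ (ht_le n)⟩
  have h_path :
      Continuous fun t : ℝ≥0 => (1 - t) • ν.toFiniteMeasure + t • Λ.toFiniteMeasure := by
    fun_prop
  have ht : Tendsto t atTop (𝓝 0) := by
    simpa [t, Function.comp_def] using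
      (tendsto_inv_atTop_nhds_zero_nat (𝕜 := ℝ≥0)).comp (tendsto_add_atTop_nat 1)
  have h_lim : Tendsto μ atTop (𝓝 ν) := by
    rw [ProbabilityMeasure.tendsto_nhds_iff_toFiniteMeasure_tendsto_nhds]
    convert (h_path.tendsto 0).comp ht using 1
    · rfl
    · simp
  exact mem_closure_of_tendsto h_lim (Eventually.of_forall fun n =>
    ⟨t n, by positivity, Measure.le_add_left le_rfl⟩)

end Density

section Main

variable {X : Type*} [MetricSpace X] [MeasurableSpace X] [BorelSpace X] [CompactSpace X]

theorem exists_dense_isGδ_forall_holderExp_le {A : Set X} {s : ℝ} (ρ : Measure X)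
    [IsFiniteMeasure ρ] (hρ : ∀ a ∈ A, LowerRegularOn ρ s {a}) :
    ∃ Ω : Set (ProbabilityMeasure X), Dense Ω ∧ IsGδ Ω ∧
      ∀ μ ∈ Ω, ∀ x ∈ A, holderExp (μ : Measure X) x ≤ s := by
  rcases A.eq_empty_or_nonempty with rfl | ⟨a, ha⟩
  · exact ⟨univ, dense_univ, .univ, by simp⟩
  have : Nonempty X := ⟨a⟩
  obtain ⟨B, hB_closed, hB_reg, hAB⟩ := exists_closed_cover_lowerRegularOn hρ
  let ρ' : FiniteMeasure X := ⟨ρ, inferInstance⟩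
  have hρ'_ne : ρ' ≠ 0 := fun h => (hρ a ha).measure_ne_zero (singleton_nonempty a)
    (congrArg FiniteMeasure.toMeasure h)
  have hΛ_reg : ∀ k, LowerRegularOn (ρ'.normalize : Measure X) s (B k) := fun k => by
    rw [ρ'.toMeasure_normalize_eq_of_nonzero hρ'_ne]
    exact (hB_reg k).smul <| inv_pos.2 <| pos_iff_ne_zero.2 <|
      (FiniteMeasure.mass_nonzero_iff _).2 hρ'_ne
  refine ⟨⋂ k, ⋂ n : ℕ, heavyBallSet (B k) s (1 / (n + 1)), ?_,
    .iInter fun k => .iInter fun n => (isOpen_heavyBallSet (hB_closed k).isCompact _ _).isGδ,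
    fun μ hμ x hx => ?_⟩
  · refine (dense_setOf_smul_le ρ'.normalize).mono ?_
    rintro μ ⟨t, ht, hle⟩
    exact mem_iInter₂.2 fun k n =>
      (((hΛ_reg k).smul ht).mono_measure hle).mem_heavyBallSet Nat.one_div_pos_of_nat
  · obtain ⟨k, hk⟩ := mem_iUnion.1 (hAB hx)
    exact holderExp_le_of_forall_mem_heavyBallSet hk (mem_iInter₂.1 hμ k)

end Main

theorem typical_holder_exponent_le_density_exponent_general
    (d : ℕ) (K A : Set (EuclideanSpace ℝ (Fin d))) (hK : IsCompact K) (hA : A ⊆ K)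
    (s : ℝ)
    (lam : Measure (EuclideanSpace ℝ (Fin d))) [IsFiniteMeasure lam]
    (hdens : ∀ a ∈ A, 0 < lowerDensity K a lam s) :
    ∃ Ω : Set (ProbabilityMeasure K), Dense Ω ∧ IsGδ Ω ∧
      ∀ μ ∈ Ω, (∀ x (hx : x ∈ A), holderExp (μ : Measure K) ⟨x, hA hx⟩ ≤ s) ∧
        ∀ h > s, {x : K | holderExp (μ : Measure K) x = h} ∩ {x : K | (x : EuclideanSpace ℝ (Fin d)) ∈ A} = ∅ := by
  have : CompactSpace K := isCompact_iff_compactSpace.mp hK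
  obtain ⟨Ω, hΩ_dense, hΩ_Gδ, hΩ⟩ :=
    exists_dense_isGδ_forall_holderExp_le (A := {x : K | (x : EuclideanSpace ℝ (Fin d)) ∈ A})
      (lam.comap Subtype.val) fun a ha =>
        lowerRegularOn_comap_of_lowerDensity_pos hK.measurableSet (hdens a ha)
  refine ⟨Ω, hΩ_dense, hΩ_Gδ, fun μ hμ => ⟨fun x hx => hΩ μ hμ _ hx, fun h hh => ?_⟩⟩
  exact eq_empty_of_forall_notMem fun x ⟨hxh, hxA⟩ => hh.not_ge (hxh ▸ hΩ μ hμ x hxA)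

/-- If `A ⊆ K` and a finite Borel measure `λ` on `K` has positive lower `s`-density
at every point of `A`, then typical probability measures `μ` on `K` satisfy
`h_μ(x) ≤ s` for all `x ∈ A`; equivalently `E_μ(h) ∩ A = ∅` for all `h > s`. -/
theorem typical_holder_exponent_le_density_exponent
    (d : ℕ) (K A : Set (EuclideanSpace ℝ (Fin d))) (hK : IsCompact K) (hA : A ⊆ K)
    (s : ℝ) (hs : 0 < s) (hsd : s ≤ d)
    (lam : Measure (EuclideanSpace ℝ (Fin d))) [IsFiniteMeasure lam]
    (hlamK : lam Kᶜ = 0)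
    (hdens : ∀ a ∈ A, 0 < lowerDensity K a lam s) :
    ∃ Ω : Set (ProbabilityMeasure K), Dense Ω ∧ IsGδ Ω ∧
      ∀ μ ∈ Ω, (∀ x (hx : x ∈ A), holderExp (μ : Measure K) ⟨x, hA hx⟩ ≤ s) ∧
        ∀ h > s, {x : K | holderExp (μ : Measure K) x = h} ∩ {x : K | (x : EuclideanSpace ℝ (Fin d)) ∈ A} = ∅ :=
  typical_holder_exponent_le_density_exponent_general d K A hK hA s lam hdens
end

section
/- Let K ⊂ ℝ^d be compact and let s be the upper box-counting dimension of K. Then there exists a dense G_δ set Ω in M(K) such that for every μ ∈ Ω and every x ∈ K, h_μ(x) ≤ s. In particular, for all μ ∈ Ω and h > s, the level set E_μ(h) = {x ∈ K : h_μ(x) = h} is empty. -/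
/-!
For `η > 0` let `G_η` be the set of probability measures `ν` on `K` such that for some `r < η`
and some finite `r`-net `F` of `K`, every ball `B(p, r)`, `p ∈ F`, has `ν`-mass more than
`r ^ (s + η)`. Each `G_η` is open, since `ν ↦ ν U` is lower semicontinuous for open `U`. It is
dense: by the definition of `s`, a maximal packing gives for all small `r` an `r`-net of at most
`r ^ (-(s + η / 2))` points, and mixing a proportion `δ > r ^ (η / 2)` of the uniform measure on
that net into any `μ` lands in `G_η`. By Baire, `⋂ₙ G_{1/(n+1)}` is a dense `G_δ`; a measure in
it gives every `B(x, 2r)` mass more than `r ^ (s + η)` for arbitrarily small `r` and `η`,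
so `h_μ(x) ≤ s`.
-/

open MeasureTheory Metric Filter Topology

/-- `N_r(E)`: the largest number of disjoint open balls of radius `r` with centers in `E`. -/
noncomputable def packingNumber {X : Type*} [MetricSpace X] (E : Set X) (r : ℝ) : ℕ :=
  sSup {n : ℕ | ∃ t : Fin n → X, (∀ i, t i ∈ E) ∧
    Pairwise fun i j => Disjoint (ball (t i) r) (ball (t j) r)}

/-- The upper box-counting dimension `limsup_{r→0} log N_r(E) / (-log r)`. -/
noncomputable def upperBoxDim {X : Type*} [MetricSpace X] (E : Set X) : ℝ :=
  limsup (fun r : ℝ => Real.log (packingNumber E r) / (-Real.log r)) (𝓝[>] 0)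

open Set
open scoped ENNReal

theorem liminf_le_of_tendsto_of_eventually_le {α ι β : Type*}
    [ConditionallyCompleteLinearOrder β] [TopologicalSpace β] [OrderTopology β]
    [DenselyOrdered β] {l : Filter α} {l' : Filter ι} [l'.NeBot] {f : α → β}
    (hf : IsBoundedUnder (· ≥ ·) l f) {u : ι → α} (hu : Tendsto u l' l) {b : ι → β} {s : β}
    (hb : Tendsto b l' (𝓝 s)) (hfb : ∀ᶠ i in l', f (u i) ≤ b i) : liminf f l ≤ s := by
  refine le_of_forall_gt_imp_ge_of_dense fun c hc => liminf_le_of_frequently_le ?_ hf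
  refine hu.frequently (Eventually.frequently ?_)
  filter_upwards [hfb, hb.eventually (gt_mem_nhds hc)] with i hfi hbi
  exact hfi.trans hbi.le

theorem Real.log_div_neg_log_le_iff {N r a : ℝ} (hN : 0 < N) (hr₀ : 0 < r) (hr₁ : r < 1) :
    Real.log N / -Real.log r ≤ a ↔ N ≤ r ^ (-a) := by
  rw [div_le_iff₀ (neg_pos.2 (Real.log_neg hr₀ hr₁)),
    ← Real.log_le_log_iff hN (Real.rpow_pos_of_pos hr₀ _), Real.log_rpow hr₀]
  ring_nf

section HolderExponent

variable {X : Type*} [MetricSpace X] [MeasurableSpace X]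

theorem isBoundedUnder_ge_log_measure_ball_div_log (μ : Measure X) [IsProbabilityMeasure μ]
    (x : X) : IsBoundedUnder (· ≥ ·) (𝓝[>] 0)
      (fun r : ℝ => Real.log (μ (ball x r)).toReal / Real.log r) := by
  refine ⟨0, eventually_map.2 ?_⟩
  filter_upwards [Ioo_mem_nhdsGT one_pos] with r hr
  exact div_nonneg_of_nonpos (Real.log_nonpos ENNReal.toReal_nonneg measureReal_le_one)
    (Real.log_neg hr.1 hr.2).le

theorem holderExp_le_of_tendsto (μ : Measure X) [IsProbabilityMeasure μ] (x : X)
    {s c : ℝ} (hc : 0 < c) {t η : ℕ → ℝ} (ht : Tendsto t atTop (𝓝[>] 0))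
    (hη : Tendsto η atTop (𝓝 0))
    (hμ : ∀ n, ENNReal.ofReal ((c * t n) ^ (s + η n)) < μ (ball x (t n))) :
    holderExp μ x ≤ s := by
  have hlog : Tendsto (fun n => Real.log (t n)) atTop atBot := Real.tendsto_log_nhdsGT_zero.comp ht
  have hb : Tendsto (fun n => (s + η n) * (1 + Real.log c / Real.log (t n))) atTop (𝓝 s) := by
    simpa using ((tendsto_const_nhds (x := s)).add hη).mul
      ((tendsto_const_nhds (x := (1 : ℝ))).add
        ((tendsto_const_nhds (x := Real.log c)).div_atBot hlog))
  refine liminf_le_of_tendsto_of_eventually_le (isBoundedUnder_ge_log_measure_ball_div_log μ x)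
    ht hb ?_
  filter_upwards [ht.eventually (Ioo_mem_nhdsGT one_pos)] with n ⟨htn₀, htn₁⟩
  have hct : 0 < c * t n := mul_pos hc htn₀
  have hlt : Real.log (t n) < 0 := Real.log_neg htn₀ htn₁
  have hmass : (c * t n) ^ (s + η n) < (μ (ball x (t n))).toReal :=
    (ENNReal.ofReal_lt_iff_lt_toReal (Real.rpow_nonneg hct.le _) (measure_ne_top _ _)).1 (hμ n)
  have hlog_mass : (s + η n) * Real.log (c * t n) ≤ Real.log (μ (ball x (t n))).toReal := by
    rw [← Real.log_rpow hct]
    exact Real.log_le_log (Real.rpow_pos_of_pos hct _) hmass.le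
  calc Real.log (μ (ball x (t n))).toReal / Real.log (t n)
      ≤ (s + η n) * Real.log (c * t n) / Real.log (t n) :=
        div_le_div_of_nonpos_of_le hlt.le hlog_mass
    _ = (s + η n) * (1 + Real.log c / Real.log (t n)) := by
      rw [Real.log_mul hc.ne' htn₀.ne', mul_div_assoc, add_div, div_self hlt.ne, add_comm 1]

end HolderExponent

namespace MeasureTheory.ProbabilityMeasure

theorem exists_ge_mix_uniformOfFinset {X : Type*} [MeasurableSpace X] [MeasurableSingletonClass X]
    (μ : ProbabilityMeasure X) {F : Finset X} (hF : F.Nonempty) {a : ℝ≥0∞} (ha : a ≤ 1) :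
    ∃ ν : ProbabilityMeasure X, (∀ t, (1 - a) * (μ : Measure X) t ≤ (ν : Measure X) t) ∧
      ∀ p ∈ F, a * (F.card : ℝ≥0∞)⁻¹ ≤ (ν : Measure X) {p} := by
  let ρ : Measure X := (PMF.uniformOfFinset F hF).toMeasure
  have hν : IsProbabilityMeasure ((1 - a) • (μ : Measure X) + a • ρ) :=
    ⟨by simp [tsub_add_cancel_of_le ha]⟩
  refine ⟨⟨_, hν⟩, fun t => le_self_add, fun p hp => le_add_left (le_of_eq ?_)⟩
  simp [ρ, PMF.toMeasure_apply_singleton _ _ (measurableSet_singleton p),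
    PMF.uniformOfFinset_apply_of_mem hF hp]

variable {X : Type*} [TopologicalSpace X] [MeasurableSpace X] [OpensMeasurableSpace X]

theorem isOpen_setOf_lt_measure [HasOuterApproxClosed X] {G : Set X} (hG : IsOpen G) (c : ℝ≥0∞) :
    IsOpen {ν : ProbabilityMeasure X | c < (ν : Measure X) G} := by
  refine isOpen_iff_mem_nhds.2 fun μ hμ => ?_
  have hlim := ProbabilityMeasure.le_liminf_measure_open_of_tendsto
    (tendsto_id (x := 𝓝 μ)) hG
  exact eventually_lt_of_lt_liminf (hμ.trans_le hlim)

theorem tendsto_of_forall_le_measure {μ : ProbabilityMeasure X}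
    {ν : ℕ → ProbabilityMeasure X} {δ : ℕ → ℝ≥0∞} (hδ : Tendsto δ atTop (𝓝 0))
    (hν : ∀ n t, (1 - δ n) * (μ : Measure X) t ≤ (ν n : Measure X) t) :
    Tendsto ν atTop (𝓝 μ) := by
  refine tendsto_of_forall_isOpen_le_liminf' fun G _ => ?_
  have hlim : Tendsto (fun n => (1 - δ n) * (μ : Measure X) G) atTop (𝓝 ((μ : Measure X) G)) := by
    simpa using ENNReal.Tendsto.mul_const
      (ENNReal.Tendsto.sub tendsto_const_nhds hδ (Or.inl ENNReal.one_ne_top))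
      (Or.inr (measure_ne_top _ G))
  exact hlim.liminf_eq.symm.le.trans (liminf_le_liminf (Eventually.of_forall fun n => hν n G))

end MeasureTheory.ProbabilityMeasure

/-- The covering-number form of "upper box dimension `≤ s`". -/
def UpperBoxDimLE (X : Type*) [PseudoMetricSpace X] (s : ℝ) : Prop :=
  ∀ η > 0, ∀ᶠ r in 𝓝[>] (0 : ℝ), ∃ F : Finset X,
    (∀ x, ∃ p ∈ F, dist x p < r) ∧ (F.card : ℝ) ≤ r ^ (-(s + η))

def netChargingMeasures (X : Type*) [MetricSpace X] [MeasurableSpace X] (s η : ℝ) :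
    Set (ProbabilityMeasure X) :=
  ⋃ r ∈ Ioo 0 η, ⋃ (F : Finset X) (_ : ∀ x, ∃ p ∈ F, dist x p < r),
    ⋂ p ∈ F, {ν | ENNReal.ofReal (r ^ (s + η)) < (ν : Measure X) (ball p r)}

section NetChargingMeasures

variable {X : Type*} [MetricSpace X] [MeasurableSpace X]

theorem exists_lt_measure_ball_of_mem_netChargingMeasures {s η : ℝ} {ν : ProbabilityMeasure X}
    (hν : ν ∈ netChargingMeasures X s η) :
    ∃ r ∈ Ioo 0 η, ∀ x, ENNReal.ofReal (r ^ (s + η)) < (ν : Measure X) (ball x (2 * r)) := by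
  simp only [netChargingMeasures, mem_iUnion, mem_iInter] at hν
  obtain ⟨r, hr, F, hF, hν⟩ := hν
  refine ⟨r, hr, fun x => ?_⟩
  obtain ⟨p, hpF, hxp⟩ := hF x
  refine (hν p hpF).trans_le (measure_mono (ball_subset_ball' ?_))
  rw [dist_comm]
  linarith

theorem holderExp_le_of_forall_mem_netChargingMeasures {s : ℝ} {μ : ProbabilityMeasure X}
    (hμ : ∀ n : ℕ, μ ∈ netChargingMeasures X s (1 / ((n : ℝ) + 1))) (x : X) :
    holderExp (μ : Measure X) x ≤ s := by
  choose r hr hball using fun n => exists_lt_measure_ball_of_mem_netChargingMeasures (hμ n)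
  have hr₀ : Tendsto r atTop (𝓝 0) := squeeze_zero (fun n => (hr n).1.le) (fun n => (hr n).2.le)
    tendsto_one_div_add_atTop_nhds_zero_nat
  have ht : Tendsto (fun n => 2 * r n) atTop (𝓝[>] 0) := tendsto_nhdsWithin_iff.2
    ⟨by simpa using hr₀.const_mul (2 : ℝ), Eventually.of_forall fun n => mul_pos two_pos (hr n).1⟩
  refine holderExp_le_of_tendsto _ x (c := 1 / 2) (by norm_num) ht
    tendsto_one_div_add_atTop_nhds_zero_nat fun n => ?_
  rw [show 1 / 2 * (2 * r n) = r n by ring]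
  exact hball n x

variable [BorelSpace X]

theorem isOpen_netChargingMeasures (s η : ℝ) : IsOpen (netChargingMeasures X s η) :=
  isOpen_biUnion fun _ _ => isOpen_iUnion fun _ => isOpen_iUnion fun _ =>
    isOpen_biInter_finset fun _ _ =>
      ProbabilityMeasure.isOpen_setOf_lt_measure isOpen_ball _

theorem exists_mem_netChargingMeasures_ge {s η : ℝ} (hX : UpperBoxDimLE X s) (hη : 0 < η)
    (μ : ProbabilityMeasure X) {δ : ℝ} (hδ₀ : 0 < δ) (hδ₁ : δ ≤ 1) :
    ∃ ν ∈ netChargingMeasures X s η,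
      ∀ t, (1 - ENNReal.ofReal δ) * (μ : Measure X) t ≤ (ν : Measure X) t := by
  have hsmall : ∀ᶠ r in 𝓝[>] (0 : ℝ), r ^ (η / 2) < δ := by
    have h := ((Real.continuous_rpow_const (by positivity : (0 : ℝ) ≤ η / 2)).tendsto 0).mono_left
      (nhdsWithin_le_nhds (s := Ioi 0))
    rw [Real.zero_rpow (by positivity)] at h
    exact h.eventually (gt_mem_nhds hδ₀)
  obtain ⟨r, ⟨F, hnet, hcard⟩, hsmall, hr⟩ :=
    ((hX (η / 2) (by positivity)).and (hsmall.and (Ioo_mem_nhdsGT hη))).exists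
  obtain ⟨x₀⟩ := nonempty_of_isProbabilityMeasure (μ : Measure X)
  have hF : F.Nonempty := let ⟨p, hp, _⟩ := hnet x₀; ⟨p, hp⟩
  obtain ⟨ν, hνμ, hνF⟩ := ProbabilityMeasure.exists_ge_mix_uniformOfFinset μ hF
    (ENNReal.ofReal_le_one.2 hδ₁)
  refine ⟨ν, mem_biUnion hr (mem_iUnion₂.2 ⟨F, hnet, mem_iInter₂.2 fun p hp => ?_⟩), hνμ⟩
  have hcard_pos : (0 : ℝ) < F.card := by exact_mod_cast hF.card_pos
  calc ENNReal.ofReal (r ^ (s + η)) < ENNReal.ofReal δ * (F.card : ℝ≥0∞)⁻¹ := by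
        rw [← div_eq_mul_inv, ← ENNReal.ofReal_natCast, ← ENNReal.ofReal_div_of_pos hcard_pos,
          ENNReal.ofReal_lt_ofReal_iff (by positivity), lt_div_iff₀ hcard_pos]
        calc r ^ (s + η) * F.card ≤ r ^ (s + η) * r ^ (-(s + η / 2)) :=
            mul_le_mul_of_nonneg_left hcard (Real.rpow_nonneg hr.1.le _)
          _ = r ^ (η / 2) := by rw [← Real.rpow_add hr.1]; ring_nf
          _ < δ := hsmall
    _ ≤ (ν : Measure X) {p} := hνF p hp
    _ ≤ (ν : Measure X) (ball p r) := measure_mono (singleton_subset_iff.2 (mem_ball_self hr.1))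

theorem dense_netChargingMeasures {s η : ℝ} (hX : UpperBoxDimLE X s) (hη : 0 < η) :
    Dense (netChargingMeasures X s η) := by
  intro μ
  choose ν hν hνμ using fun n : ℕ => exists_mem_netChargingMeasures_ge hX hη μ
    (δ := 1 / ((n : ℝ) + 1)) (by positivity) (div_le_one_of_le₀ (by simp) (by positivity))
  have hδ : Tendsto (fun n : ℕ => ENNReal.ofReal (1 / ((n : ℝ) + 1))) atTop (𝓝 0) := by
    simpa using ENNReal.tendsto_ofReal tendsto_one_div_add_atTop_nhds_zero_nat
  exact mem_closure_of_tendsto (ProbabilityMeasure.tendsto_of_forall_le_measure hδ hνμ)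
    (Eventually.of_forall hν)

end NetChargingMeasures

section Packing

variable {X : Type*} [MetricSpace X]

def packingCounts (E : Set X) (r : ℝ) : Set ℕ :=
  {n : ℕ | ∃ t : Fin n → X, (∀ i, t i ∈ E) ∧
    Pairwise fun i j => Disjoint (ball (t i) r) (ball (t j) r)}

theorem packingNumber_eq_sSup (E : Set X) (r : ℝ) :
    packingNumber E r = sSup (packingCounts E r) := rfl

theorem zero_mem_packingCounts (E : Set X) (r : ℝ) : 0 ∈ packingCounts E r :=
  ⟨Fin.elim0, fun i => i.elim0, fun i => i.elim0⟩

theorem one_le_packingNumber {E : Set X} {r : ℝ} (h : BddAbove (packingCounts E r))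
    (hE : E.Nonempty) : 1 ≤ packingNumber E r := by
  obtain ⟨x, hx⟩ := hE
  rw [packingNumber_eq_sSup]
  exact le_csSup h ⟨fun _ => x, fun _ => hx, fun i j hij => absurd (Subsingleton.elim i j) hij⟩

theorem packingNumber_mem_packingCounts {E : Set X} {r : ℝ} (h : BddAbove (packingCounts E r)) :
    packingNumber E r ∈ packingCounts E r := by
  rw [packingNumber_eq_sSup]
  exact Nat.sSup_mem ⟨0, zero_mem_packingCounts E r⟩ h

/-- A point at distance `≥ 2r` from all centres of a maximal packing could be added to it. -/
theorem exists_net_of_bddAbove_packingCounts {E : Set X} {r : ℝ}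
    (h : BddAbove (packingCounts E r)) :
    ∃ t : Fin (packingNumber E r) → X, (∀ i, t i ∈ E) ∧ ∀ x ∈ E, ∃ i, dist x (t i) < 2 * r := by
  obtain ⟨t, htE, hdisj⟩ := packingNumber_mem_packingCounts h
  refine ⟨t, htE, fun x hx => ?_⟩
  by_contra! hfar
  have hsnoc : packingNumber E r + 1 ∈ packingCounts E r := by
    refine ⟨Fin.snoc t x, Fin.lastCases (by simpa using hx) (by simpa using htE), ?_⟩
    intro i j hij
    cases i using Fin.lastCases with
    | last => cases j using Fin.lastCases with
      | last => exact absurd rfl hij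
      | cast j => simpa using ball_disjoint_ball (by linarith [hfar j])
    | cast i => cases j using Fin.lastCases with
      | last => simpa using ball_disjoint_ball (by linarith [hfar i, dist_comm x (t i)])
      | cast j => simpa using hdisj fun h => hij (by rw [h])
  exact (packingNumber_eq_sSup E r ▸ le_csSup h hsnoc).not_gt (Nat.lt_succ_self _)

end Packing

section FiniteDimensional

open Module

variable {E : Type*} [NormedAddCommGroup E] [NormedSpace ℝ E] [FiniteDimensional ℝ E]

/-- Volume argument: the disjoint balls `B(tᵢ, r)` all lie in `B(0, D + r)`. -/
theorem card_le_of_pairwise_disjoint_ball {n : ℕ} {t : Fin n → E} {D r : ℝ} (hD : 0 ≤ D)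
    (hr : 0 < r) (ht : ∀ i, t i ∈ closedBall (0 : E) D)
    (hdisj : Pairwise fun i j => Disjoint (ball (t i) r) (ball (t j) r)) :
    (n : ℝ) ≤ ((D + r) / r) ^ finrank ℝ E := by
  borelize E
  let μ : Measure E := Measure.addHaar
  have hsub : ⋃ i, ball (t i) r ⊆ ball 0 (D + r) := iUnion_subset fun i y hy => by
    have := dist_triangle y (t i) 0
    rw [mem_ball] at hy ⊢
    linarith [mem_closedBall.1 (ht i)]
  have hvol : (n : ℝ≥0∞) * (ENNReal.ofReal (r ^ finrank ℝ E) * μ (ball 0 1)) ≤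
      ENNReal.ofReal ((D + r) ^ finrank ℝ E) * μ (ball 0 1) := calc
    _ = μ (⋃ i, ball (t i) r) := by
      rw [measure_iUnion hdisj fun _ => measurableSet_ball, tsum_fintype]
      simp [Measure.addHaar_ball_of_pos μ _ hr]
    _ ≤ μ (ball 0 (D + r)) := measure_mono hsub
    _ = _ := Measure.addHaar_ball_of_pos μ _ (by positivity)
  rw [← mul_assoc, ENNReal.mul_le_mul_iff_left (measure_ball_pos μ 0 one_pos).ne'
    measure_ball_lt_top.ne, ← ENNReal.ofReal_natCast, ← ENNReal.ofReal_mul (by positivity),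
    ENNReal.ofReal_le_ofReal_iff (by positivity)] at hvol
  rwa [div_pow, le_div_iff₀ (by positivity)]

theorem bddAbove_packingCounts {K : Set E} (hK : Bornology.IsBounded K) {r : ℝ} (hr : 0 < r) :
    BddAbove (packingCounts K r) := by
  obtain ⟨D, hD, hKD⟩ := hK.subset_closedBall_lt 0 0
  exact ⟨⌊((D + r) / r) ^ finrank ℝ E⌋₊, fun n ⟨t, htK, hdisj⟩ =>
    Nat.le_floor (card_le_of_pairwise_disjoint_ball hD.le hr (fun i => hKD (htK i)) hdisj)⟩

theorem eventually_packingNumber_le_rpow {K : Set E} (hK : Bornology.IsBounded K) :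
    ∀ᶠ r in 𝓝[>] (0 : ℝ), (packingNumber K r : ℝ) ≤ r ^ (-((finrank ℝ E : ℝ) + 1)) := by
  obtain ⟨D, hD, hKD⟩ := hK.subset_closedBall_lt 0 0
  set k := finrank ℝ E
  have hC : 0 < ((D + 1) ^ k)⁻¹ := by positivity
  filter_upwards [Ioo_mem_nhdsGT (lt_min one_pos hC)] with r ⟨hr₀, hr⟩
  obtain ⟨t, htK, hdisj⟩ := packingNumber_mem_packingCounts (bddAbove_packingCounts hK hr₀)
  have hr₁ : r ≤ 1 := (hr.trans_le (min_le_left _ _)).le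
  have hrC : r * (D + 1) ^ k ≤ 1 :=
    (le_div_iff₀ (by positivity)).1 (by simpa using (hr.trans_le (min_le_right _ _)).le)
  calc (packingNumber K r : ℝ) ≤ ((D + r) / r) ^ k :=
        card_le_of_pairwise_disjoint_ball hD.le hr₀ (fun i => hKD (htK i)) hdisj
    _ ≤ ((D + 1) / r) ^ k := by gcongr
    _ = r * (D + 1) ^ k * (r ^ (k + 1))⁻¹ := by rw [div_pow, pow_succ]; field_simp
    _ ≤ (r ^ (k + 1))⁻¹ := mul_le_of_le_one_left (by positivity) hrC
    _ = r ^ (-((k : ℝ) + 1)) := by rw [Real.rpow_neg hr₀.le, ← Nat.cast_succ, Real.rpow_natCast]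

variable {K : Set E}

theorem isBoundedUnder_log_packingNumber_div (hK : Bornology.IsBounded K) (hne : K.Nonempty) :
    IsBoundedUnder (· ≤ ·) (𝓝[>] 0) fun r : ℝ => Real.log (packingNumber K r) / -Real.log r := by
  refine ⟨(finrank ℝ E : ℝ) + 1, eventually_map.2 ?_⟩
  filter_upwards [eventually_packingNumber_le_rpow hK, Ioo_mem_nhdsGT one_pos] with r hN hr
  refine (Real.log_div_neg_log_le_iff ?_ hr.1 hr.2).2 hN
  exact_mod_cast one_le_packingNumber (bddAbove_packingCounts hK hr.1) hne

theorem eventually_packingNumber_le_rpow_of_upperBoxDim_lt (hK : Bornology.IsBounded K)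
    (hne : K.Nonempty) {a : ℝ} (ha : upperBoxDim K < a) :
    ∀ᶠ r in 𝓝[>] (0 : ℝ), (packingNumber K r : ℝ) ≤ r ^ (-a) := by
  filter_upwards [eventually_lt_of_limsup_lt ha (isBoundedUnder_log_packingNumber_div hK hne),
    Ioo_mem_nhdsGT one_pos] with r hlt hr
  refine (Real.log_div_neg_log_le_iff ?_ hr.1 hr.2).1 hlt.le
  exact_mod_cast one_le_packingNumber (bddAbove_packingCounts hK hr.1) hne

theorem upperBoxDimLE_upperBoxDim (hK : Bornology.IsBounded K) :
    UpperBoxDimLE K (upperBoxDim K) := by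
  intro η hη
  rcases K.eq_empty_or_nonempty with rfl | hne
  · filter_upwards [self_mem_nhdsWithin] with r hr
    exact ⟨∅, fun x => x.2.elim, by simpa using Real.rpow_nonneg hr.le _⟩
  have hpack := eventually_nhdsGT_zero_mul_left (inv_pos.2 two_pos)
    (eventually_packingNumber_le_rpow_of_upperBoxDim_lt hK hne (a := upperBoxDim K + η / 2)
      (by linarith))
  have hconst : ∀ᶠ r in 𝓝[>] (0 : ℝ), (2 : ℝ) ^ (upperBoxDim K + η / 2) ≤ r ^ (-(η / 2)) :=
    (tendsto_rpow_neg_nhdsGT_zero (by linarith)).eventually_ge_atTop _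
  filter_upwards [hpack, hconst, self_mem_nhdsWithin] with r hN h2 (hr : 0 < r)
  obtain ⟨t, htK, hnet⟩ := exists_net_of_bddAbove_packingCounts
    (bddAbove_packingCounts hK (mul_pos (inv_pos.2 two_pos) hr))
  classical
  refine ⟨Finset.univ.image fun i => ⟨t i, htK i⟩, fun x => ?_, ?_⟩
  · obtain ⟨i, hi⟩ := hnet x x.2
    exact ⟨_, Finset.mem_image_of_mem _ (Finset.mem_univ i), by
      rwa [mul_inv_cancel_left₀ two_ne_zero] at hi⟩
  · calc ((Finset.univ.image fun i => (⟨t i, htK i⟩ : K)).card : ℝ)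
        ≤ packingNumber K (2⁻¹ * r) := by exact_mod_cast Finset.card_image_le.trans (by simp)
      _ ≤ (2⁻¹ * r) ^ (-(upperBoxDim K + η / 2)) := hN
      _ = 2 ^ (upperBoxDim K + η / 2) * r ^ (-(upperBoxDim K + η / 2)) := by
        rw [Real.mul_rpow (by norm_num) hr.le, Real.inv_rpow zero_le_two, Real.rpow_neg zero_le_two,
          inv_inv]
      _ ≤ r ^ (-(η / 2)) * r ^ (-(upperBoxDim K + η / 2)) := by gcongr
      _ = r ^ (-(upperBoxDim K + η)) := by rw [← Real.rpow_add hr]; ring_nf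

end FiniteDimensional

/-- If `K ⊂ ℝ^d` is compact with upper box dimension `s`, then for a typical
probability measure `μ` on `K`, every `x ∈ K` satisfies `h_μ(x) ≤ s`; in
particular `E_μ(h) = ∅` for all `h > s`. -/
theorem typical_holder_exponent_le_upper_box_dim
    (d : ℕ) (K : Set (EuclideanSpace ℝ (Fin d))) (hK : IsCompact K)
    (s : ℝ) (hs : upperBoxDim K = s) :
    ∃ Ω : Set (ProbabilityMeasure K), Dense Ω ∧ IsGδ Ω ∧
      ∀ μ ∈ Ω, (∀ x : K, holderExp (μ : Measure K) x ≤ s) ∧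
        ∀ h > s, {x : K | holderExp (μ : Measure K) x = h} = ∅ := by
  subst hs
  have := isCompact_iff_compactSpace.1 hK
  have hX := upperBoxDimLE_upperBoxDim hK.isBounded
  refine ⟨⋂ n : ℕ, netChargingMeasures K (upperBoxDim K) (1 / ((n : ℝ) + 1)),
    dense_iInter_of_isOpen (fun n => isOpen_netChargingMeasures _ _)
      (fun n => dense_netChargingMeasures hX (by positivity)),
    .iInter fun n => (isOpen_netChargingMeasures _ _).isGδ, fun μ hμ => ?_⟩
  have hle : ∀ x : K, holderExp (μ : Measure K) x ≤ upperBoxDim K :=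
    holderExp_le_of_forall_mem_netChargingMeasures (mem_iInter.1 hμ)
  exact ⟨hle, fun h hh => eq_empty_of_forall_notMem fun x hx => (hle x).not_gt (hx ▸ hh)⟩
end

section
/- Let (Δ_k)_{k≥1} be positive integers and (J_k) a sequence with J_k > e^{J_{k−1}} for all k, and suppose there are constants c₁, c₂ > 0 with c₁ 2^{s J_k (1 − 1/k)} ≤ Δ_k ≤ c₂ 2^{s J_k} for all k, where s > 0. Then for all sufficiently large p, 2^{−s J_p (1 + 1/p)} ≤ (Π_{k=1}^p Δ_k)^{−1} ≤ 2^{−s J_p (1 − 2/p)}. -/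
/-!
Taking `logb 2`, the logarithm of `∏_{k ≤ p} Δ_k` is at least `logb 2 Δ_p ≥ s J_p (1 - 1/p) + O(1)`
and at most `s J_p + O(p) + s ∑_{1 ≤ k < p} J_k`. Since `J_p > exp J_{p-1}` and `J_{p-1} ≥ p + O(1)`,
both `p²` and `p ∑_{1 ≤ k < p} J_k ≤ p² J_{p-1}` are `o(J_p)`, so every error term is eventually
absorbed by `s J_p / p`.
-/

open Filter Real Finset

lemma eventually_sq_mul_le_exp (C D : ℝ) :
    ∀ᶠ y in atTop, (y + D) ^ 2 * (y + C) ≤ exp y := by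
  filter_upwards [(isLittleO_pow_exp_atTop (n := 3)).bound (by norm_num : (0 : ℝ) < 1 / 8),
    eventually_ge_atTop |C|, eventually_ge_atTop |D|] with y hy hC hD
  obtain ⟨hC₁, hC₂⟩ := abs_le.mp hC
  obtain ⟨hD₁, hD₂⟩ := abs_le.mp hD
  have hy₀ : 0 ≤ y := (abs_nonneg C).trans hC
  rw [norm_of_nonneg (by positivity), norm_of_nonneg (exp_pos y).le] at hy
  calc (y + D) ^ 2 * (y + C) ≤ (2 * y) ^ 2 * (2 * y) := by
        gcongr <;> linarith
    _ = 8 * y ^ 3 := by ring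
    _ ≤ exp y := by linarith

section ExpLt

variable {J : ℕ → ℝ}

lemma add_one_lt_succ_of_exp_lt (hJ : ∀ k ≥ 1, exp (J (k - 1)) < J k) (k : ℕ) :
    J k + 1 < J (k + 1) :=
  (add_one_le_exp (J k)).trans_lt (hJ (k + 1) k.succ_pos)

lemma strictMono_of_exp_lt (hJ : ∀ k ≥ 1, exp (J (k - 1)) < J k) : StrictMono J :=
  strictMono_nat_of_lt_succ fun k => (lt_add_one _).trans (add_one_lt_succ_of_exp_lt hJ k)

lemma pos_of_exp_lt (hJ : ∀ k ≥ 1, exp (J (k - 1)) < J k) {k : ℕ} (hk : 1 ≤ k) : 0 < J k :=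
  (exp_pos _).trans (hJ k hk)

lemma add_natCast_le_of_exp_lt (hJ : ∀ k ≥ 1, exp (J (k - 1)) < J k) (k : ℕ) :
    J 0 + k ≤ J k := by
  induction k with
  | zero => simp
  | succ k ih => push_cast; linarith [add_one_lt_succ_of_exp_lt hJ k]

lemma sum_Ico_le_mul_of_exp_lt (hJ : ∀ k ≥ 1, exp (J (k - 1)) < J k) {p : ℕ} (hp : 2 ≤ p) :
    ∑ k ∈ Ico 1 p, J k ≤ p * J (p - 1) :=
  calc ∑ k ∈ Ico 1 p, J k ≤ #(Ico 1 p) • J (p - 1) :=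
        sum_le_card_nsmul _ _ _ fun k hk =>
          (strictMono_of_exp_lt hJ).monotone (by simp at hk; omega)
    _ ≤ p • J (p - 1) :=
        nsmul_le_nsmul_left (pos_of_exp_lt hJ (by omega)).le (by simp)
    _ = p * J (p - 1) := nsmul_eq_mul _ _

lemma eventually_sq_mul_le_of_exp_lt (hJ : ∀ k ≥ 1, exp (J (k - 1)) < J k) (C : ℝ) :
    ∀ᶠ p : ℕ in atTop, (p : ℝ) ^ 2 * (J (p - 1) + C) ≤ J p := by
  have hJ_tendsto : Tendsto J atTop atTop :=
    tendsto_atTop_mono (add_natCast_le_of_exp_lt hJ)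
      (tendsto_atTop_add_const_left _ _ tendsto_natCast_atTop_atTop)
  have hpred := hJ_tendsto.comp (tendsto_sub_atTop_nat 1)
  filter_upwards [eventually_ge_atTop 1, hpred.eventually (eventually_sq_mul_le_exp C (1 - J 0)),
    hpred.eventually_ge_atTop (-C)] with p hp hexp hC
  simp only [Function.comp_apply] at hexp hC
  have hp_le : (p : ℝ) ≤ J (p - 1) + (1 - J 0) := by
    have := add_natCast_le_of_exp_lt hJ (p - 1)
    rw [Nat.cast_sub hp, Nat.cast_one] at this
    linarith
  calc (p : ℝ) ^ 2 * (J (p - 1) + C) ≤ (J (p - 1) + (1 - J 0)) ^ 2 * (J (p - 1) + C) := by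
        gcongr; linarith
    _ ≤ exp (J (p - 1)) := hexp
    _ ≤ J p := (hJ p hp).le

lemma eventually_mul_add_sum_Ico_le_div_of_exp_lt (hJ : ∀ k ≥ 1, exp (J (k - 1)) < J k)
    (C : ℝ) : ∀ᶠ p : ℕ in atTop, p * C + ∑ k ∈ Ico 1 p, J k ≤ J p / p := by
  filter_upwards [eventually_ge_atTop 2, eventually_sq_mul_le_of_exp_lt hJ C] with p hp hsq
  have hp₀ : (0 : ℝ) < p := by positivity
  rw [le_div_iff₀ hp₀]
  calc (p * C + ∑ k ∈ Ico 1 p, J k) * p ≤ (p * C + p * J (p - 1)) * p := by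
        gcongr; exact sum_Ico_le_mul_of_exp_lt hJ hp
    _ = (p : ℝ) ^ 2 * (J (p - 1) + C) := by ring
    _ ≤ J p := hsq

lemma tendsto_div_natCast_of_exp_lt (hJ : ∀ k ≥ 1, exp (J (k - 1)) < J k) :
    Tendsto (fun p : ℕ => J p / p) atTop atTop := by
  refine tendsto_atTop_mono' _ ?_ tendsto_natCast_atTop_atTop
  filter_upwards [eventually_mul_add_sum_Ico_le_div_of_exp_lt hJ 1] with p hp
  have hsum : 0 ≤ ∑ k ∈ Ico 1 p, J k :=
    sum_nonneg fun k hk => (pos_of_exp_lt hJ (mem_Ico.mp hk).1).le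
  linarith

end ExpLt

section LogbBounds

variable {ι : Type*} {b c : ℝ} {f : ι → ℝ}

lemma logb_mul_rpow_self (hb₀ : 0 < b) (hb₁ : b ≠ 1) (hc : c ≠ 0) (t : ℝ) :
    logb b (c * b ^ t) = logb b c + t := by
  rw [logb_mul hc (rpow_pos_of_pos hb₀ t).ne', logb_rpow hb₀ hb₁]

lemma logb_prod_le (s : Finset ι) (hb : 1 < b) (hc : 0 < c) {g : ι → ℝ}
    (hf : ∀ i ∈ s, 0 < f i) (hfg : ∀ i ∈ s, f i ≤ c * b ^ g i) :
    logb b (∏ i ∈ s, f i) ≤ #s * logb b c + ∑ i ∈ s, g i := by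
  rw [logb_prod _ _ fun i hi => (hf i hi).ne']
  calc ∑ i ∈ s, logb b (f i) ≤ ∑ i ∈ s, (logb b c + g i) := by
        refine sum_le_sum fun i hi => ?_
        rw [← logb_mul_rpow_self (by linarith) hb.ne' hc.ne']
        exact logb_le_logb_of_le hb (hf i hi) (hfg i hi)
    _ = #s * logb b c + ∑ i ∈ s, g i := by
        rw [sum_add_distrib, sum_const, nsmul_eq_mul]

lemma le_logb_prod {s : Finset ι} (hb : 1 < b) (hc : 0 < c) (hf : ∀ i ∈ s, 1 ≤ f i)
    {j : ι} (hj : j ∈ s) {t : ℝ} (h : c * b ^ t ≤ f j) :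
    logb b c + t ≤ logb b (∏ i ∈ s, f i) := by
  rw [logb_prod _ _ fun i hi => (zero_lt_one.trans_le (hf i hi)).ne',
    ← logb_mul_rpow_self (by linarith) hb.ne' hc.ne']
  calc logb b (c * b ^ t) ≤ logb b (f j) :=
        logb_le_logb_of_le hb (by positivity) h
    _ ≤ ∑ i ∈ s, logb b (f i) :=
        single_le_sum (fun i hi => logb_nonneg hb (hf i hi)) hj

end LogbBounds

/-- Key counting estimate: if `Δ_k` are positive integers with
`c₁ 2^{sJ_k(1−1/k)} ≤ Δ_k ≤ c₂ 2^{sJ_k}` and `J_k > e^{J_{k−1}}`, then for large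
`p`, `2^{−sJ_p(1+1/p)} ≤ (Π_{k=1}^p Δ_k)^{−1} ≤ 2^{−sJ_p(1−2/p)}`. -/
theorem cantor_measure_mass_estimate
    (s : ℝ) (hs : 0 < s) (Δ : ℕ → ℕ) (hΔ : ∀ k, 0 < Δ k) (J : ℕ → ℝ)
    (hJ : ∀ k ≥ 1, Real.exp (J (k - 1)) < J k)
    (c₁ c₂ : ℝ) (hc₁ : 0 < c₁) (hc₂ : 0 < c₂)
    (hlow : ∀ k ≥ 1, c₁ * 2 ^ (s * J k * (1 - 1 / (k : ℝ))) ≤ (Δ k : ℝ))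
    (hhigh : ∀ k ≥ 1, (Δ k : ℝ) ≤ c₂ * 2 ^ (s * J k)) :
    ∀ᶠ p in atTop,
      (2 : ℝ) ^ (-(s * J p * (1 + 1 / (p : ℝ)))) ≤ (∏ k ∈ Finset.Icc 1 p, (Δ k : ℝ))⁻¹ ∧
      (∏ k ∈ Finset.Icc 1 p, (Δ k : ℝ))⁻¹ ≤ (2 : ℝ) ^ (-(s * J p * (1 - 2 / (p : ℝ)))) := by
  filter_upwards [eventually_ge_atTop 1,
    eventually_mul_add_sum_Ico_le_div_of_exp_lt hJ (logb 2 c₂ / s),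
    (tendsto_div_natCast_of_exp_lt hJ).eventually_ge_atTop (-logb 2 c₁ / s)] with p hp hsum hdiv
  have hP : 0 < ∏ k ∈ Icc 1 p, (Δ k : ℝ) := prod_pos fun k _ => Nat.cast_pos.2 (hΔ k)
  have hupper : logb 2 (∏ k ∈ Icc 1 p, (Δ k : ℝ)) ≤ s * J p * (1 + 1 / p) :=
    calc _ ≤ #(Icc 1 p) * logb 2 c₂ + ∑ k ∈ Icc 1 p, s * J k :=
          logb_prod_le _ one_lt_two hc₂ (fun k _ => Nat.cast_pos.2 (hΔ k))
            fun k hk => hhigh k (mem_Icc.1 hk).1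
      _ = s * (p * (logb 2 c₂ / s) + ∑ k ∈ Ico 1 p, J k) + s * J p := by
          rw [← Ico_add_one_right_eq_Icc, sum_Ico_succ_top hp, ← mul_sum, Nat.card_Ico,
            Nat.add_sub_cancel]
          field_simp
          ring
      _ ≤ s * (J p / p) + s * J p := by gcongr
      _ = s * J p * (1 + 1 / p) := by ring
  have hlower : s * J p * (1 - 2 / p) ≤ logb 2 (∏ k ∈ Icc 1 p, (Δ k : ℝ)) :=
    calc s * J p * (1 - 2 / p) ≤ logb 2 c₁ + s * J p * (1 - 1 / p) := by
          rw [div_le_iff₀ hs] at hdiv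
          linarith [show s * J p * (1 - 2 / p) = s * J p * (1 - 1 / p) - J p / p * s by ring]
      _ ≤ _ := le_logb_prod one_lt_two hc₁ (fun k _ => Nat.one_le_cast.2 (hΔ k))
          (right_mem_Icc.2 hp) (hlow p hp)
  rw [rpow_neg zero_le_two, rpow_neg zero_le_two]
  exact ⟨inv_anti₀ hP ((logb_le_iff_le_rpow one_lt_two hP).1 hupper),
    inv_anti₀ (by positivity) ((le_logb_iff_rpow_le one_lt_two hP).1 hlower)⟩
end
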